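/- arXiv:0901.4115 — 6 statements merged into one kernel-verified Lean document; each statement's English description precedes it below -/
import Mathlib

section
/- Let μ be a Borel probability measure on ℝ^n with finite support (spectral with finite spectrum Λ). Then μ is purely atomic and all atoms have equal measure 1/#Λ. -/
/-!
By Parseval, the exponentials `e_λ`, `λ ∈ Λ`, are orthonormal in `L²(μ)` and every `e_t` has
full Bessel sum, so `e_t = ∑_λ μ̂(t - λ) e_λ` in `L²(μ)`; by continuity in `t`, for `μ`-a.e. `x`
this holds at `x` for all `t` simultaneously. The characters `t ↦ e_t(x)` of distinct points are
linearly independent, and those of such points lie in the span of the `#Λ` functions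
`t ↦ μ̂(t - λ)`; so `μ` is carried by a finite set `A` with `#A ≤ #Λ`. With weights `q_a = μ{a}`,
the matrix `U = (e_λ(a))` satisfies `U diag(q) U* = 1`; this forces `#Λ ≤ #A`, so `U` is square,
hence `U* U diag(q) = 1` as well, whose diagonal reads `#Λ q_a = 1`.
-/

open MeasureTheory Complex ENNReal

/-- Fourier transform of a measure on `ℝⁿ`. -/
noncomputable def muHat {n : ℕ} (μ : Measure (Fin n → ℝ)) (t : Fin n → ℝ) : ℂ :=
  ∫ x, Complex.exp (2 * (Real.pi : ℂ) * Complex.I * ((∑ i, t i * x i : ℝ) : ℂ)) ∂μ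

/-- `Λ` is a spectrum for `μ`: the exponentials `e_λ`, `λ ∈ Λ`, form an orthonormal
basis of `L²(μ)`; equivalently `∑_{λ∈Λ} |μ̂(t-λ)|² = 1` for all `t`. -/
def IsSpectrum {n : ℕ} (μ : Measure (Fin n → ℝ)) (Λ : Set (Fin n → ℝ)) : Prop :=
  ∀ t : Fin n → ℝ, ∑' l : Λ, ((‖muHat μ (t - (l : Fin n → ℝ))‖₊ : ℝ≥0∞) ^ 2) = 1

open Matrix

noncomputable def expChar {n : ℕ} (x : Fin n → ℝ) : AddChar (Fin n → ℝ) ℂ where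
  toFun t := Complex.exp (2 * Real.pi * Complex.I * ((t ⬝ᵥ x : ℝ) : ℂ))
  map_zero_eq_one' := by simp
  map_add_eq_mul' s t := by rw [← Complex.exp_add, add_dotProduct]; push_cast; ring_nf

section expChar

variable {n : ℕ}

theorem expChar_apply (x t : Fin n → ℝ) :
    expChar x t = Complex.exp (2 * Real.pi * Complex.I * ((t ⬝ᵥ x : ℝ) : ℂ)) := rfl

theorem muHat_eq_integral (μ : Measure (Fin n → ℝ)) (t : Fin n → ℝ) :
    muHat μ t = ∫ x, expChar x t ∂μ := rfl

theorem norm_expChar (x t : Fin n → ℝ) : ‖expChar x t‖ = 1 := by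
  rw [expChar_apply, Complex.norm_exp]; simp

theorem conj_expChar (x t : Fin n → ℝ) : starRingEnd ℂ (expChar x t) = expChar x (-t) := by
  rw [expChar_apply, expChar_apply, ← Complex.exp_conj, neg_dotProduct]; simp [map_ofNat]

theorem continuous_expChar (x : Fin n → ℝ) : Continuous fun t => expChar x t := by
  simp only [expChar_apply, dotProduct]; fun_prop

theorem continuous_expChar_apply (t : Fin n → ℝ) : Continuous fun x => expChar x t := by
  simp only [expChar_apply, dotProduct]; fun_prop

theorem expChar_injective : Function.Injective (expChar (n := n)) := by
  intro x y hxy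
  by_contra hne
  set d := x - y
  have hd : d ⬝ᵥ d ≠ 0 := fun h => hne (sub_eq_zero.mp (dotProduct_self_eq_zero.mp h))
  -- at this `t` the characters of `x` and `y` differ by the factor `exp (π i) = -1`
  set t := (2 * (d ⬝ᵥ d))⁻¹ • d
  have htd : t ⬝ᵥ x = t ⬝ᵥ y + 1 / 2 := by
    have : t ⬝ᵥ d = 1 / 2 := by rw [smul_dotProduct, smul_eq_mul]; field_simp
    rw [← this, ← dotProduct_add, add_sub_cancel]
  have h := DFunLike.congr_fun hxy t
  rw [expChar_apply, expChar_apply, htd, Complex.ofReal_add, mul_add, Complex.exp_add] at h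
  have : Complex.exp (2 * Real.pi * Complex.I * ((1 / 2 : ℝ) : ℂ)) = -1 := by
    rw [← Complex.exp_pi_mul_I]; congr 1; push_cast; ring
  rw [this] at h
  exact Complex.exp_ne_zero _ (by linear_combination -h / 2)

theorem linearIndependent_expChar : LinearIndependent ℂ fun x : Fin n → ℝ => ⇑(expChar x) :=
  (linearIndependent_monoidHom (Multiplicative (Fin n → ℝ)) ℂ).comp
    (fun x => (expChar x).toMonoidHom) (AddChar.toMonoidHomEquiv.injective.comp expChar_injective)

theorem finite_and_ncard_le_of_expChar_mem_span {S : Set (Fin n → ℝ)}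
    (F : Finset ((Fin n → ℝ) → ℂ))
    (hS : ∀ x ∈ S, ⇑(expChar x) ∈ Submodule.span ℂ (F : Set ((Fin n → ℝ) → ℂ))) :
    S.Finite ∧ S.ncard ≤ F.card := by
  have hli : LinearIndependent ℂ ((fun x => ⇑(expChar x)) ∘ ((↑) : S → Fin n → ℝ)) :=
    linearIndependent_expChar.comp _ Subtype.val_injective
  have hspan : Set.range ((fun x => ⇑(expChar x)) ∘ ((↑) : S → Fin n → ℝ)) ⊆
      (Submodule.span ℂ (F : Set ((Fin n → ℝ) → ℂ)) : Set ((Fin n → ℝ) → ℂ)) := by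
    rintro _ ⟨x, rfl⟩; exact hS x x.2
  have : Finite S := hli.finite_of_le_span_finite _ (F : Set ((Fin n → ℝ) → ℂ)) hspan
  have := Fintype.ofFinite S
  refine ⟨S.toFinite, ?_⟩
  rw [Set.ncard_eq_toFinset_card', Set.toFinset_card]
  simpa using linearIndependent_le_span_aux' _ hli (F : Set ((Fin n → ℝ) → ℂ)) hspan

end expChar

theorem muHat_zero {n : ℕ} (μ : Measure (Fin n → ℝ)) [IsProbabilityMeasure μ] :
    muHat μ 0 = 1 := by
  simp [muHat_eq_integral]

theorem continuous_muHat {n : ℕ} (μ : Measure (Fin n → ℝ)) [IsFiniteMeasure μ] :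
    Continuous (muHat μ) :=
  continuous_of_dominated (bound := fun _ => 1)
    (fun t => (continuous_expChar_apply t).aestronglyMeasurable)
    (fun t => .of_forall fun x => (norm_expChar x t).le) (integrable_const 1)
    (.of_forall continuous_expChar)

theorem muHat_finset_sum_smul_dirac {n : ℕ} (A : Finset (Fin n → ℝ))
    (w : (Fin n → ℝ) → ℝ≥0∞) (hw : ∀ a ∈ A, w a ≠ ∞) (t : Fin n → ℝ) :
    muHat (∑ a ∈ A, w a • Measure.dirac a) t = ∑ a ∈ A, ((w a).toReal : ℂ) * expChar a t := by
  rw [muHat_eq_integral, integral_finsetSum_measure fun a ha =>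
    (integrable_dirac enorm_lt_top).smul_measure (hw a ha)]
  refine Finset.sum_congr rfl fun a _ => ?_
  rw [integral_smul_measure, integral_dirac, Complex.real_smul]

theorem Orthonormal.eq_sum_inner_smul_of_sum_norm_inner_sq_eq {𝕜 E ι : Type*} [RCLike 𝕜]
    [NormedAddCommGroup E] [InnerProductSpace 𝕜 E] {v : ι → E} (hv : Orthonormal 𝕜 v)
    {s : Finset ι} {x : E} (hx : ∑ i ∈ s, ‖inner 𝕜 (v i) x‖ ^ 2 = ‖x‖ ^ 2) :
    x = ∑ i ∈ s, inner 𝕜 (v i) x • v i := by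
  set p := ∑ i ∈ s, inner 𝕜 (v i) x • v i
  have hxp : inner 𝕜 x p = ((‖x‖ ^ 2 : ℝ) : 𝕜) := by
    simp only [p, inner_sum, inner_smul_right, ← hx, RCLike.ofReal_sum, RCLike.ofReal_pow]
    exact Finset.sum_congr rfl fun i _ => by rw [← inner_conj_symm x (v i), RCLike.mul_conj]
  have hpp : ‖p‖ ^ 2 = ‖x‖ ^ 2 := by
    rw [@norm_sq_eq_re_inner 𝕜, hv.inner_sum, ← hx, map_sum]
    exact Finset.sum_congr rfl fun i _ => by rw [mul_comm, RCLike.mul_conj]; norm_cast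
  have : ‖x - p‖ ^ 2 = 0 := by
    rw [@norm_sub_sq 𝕜, hxp, hpp, RCLike.ofReal_re]; ring
  simpa [sub_eq_zero] using this

namespace Matrix

variable {ι κ R : Type*} [Fintype ι] [Fintype κ] [DecidableEq ι]

theorem card_le_card_of_mul_eq_one [CommRing R] [StrongRankCondition R] {A : Matrix ι κ R}
    {B : Matrix κ ι R} (h : A * B = 1) : Fintype.card ι ≤ Fintype.card κ := by
  have := rank_mul_le_left A B
  rw [h, rank_one] at this
  exact this.trans A.rank_le_card_width

theorem card_mul_eq_one_of_mul_diagonal_mul_conjTranspose_eq_one [RCLike R] [DecidableEq κ]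
    {U : Matrix ι κ R} {q : κ → R} (hU : ∀ i k, ‖U i k‖ = 1) (h : U * diagonal q * Uᴴ = 1)
    (hcard : Fintype.card ι = Fintype.card κ) (k : κ) : (Fintype.card ι : R) * q k = 1 := by
  have h' := congrFun₂ ((mul_eq_one_comm_of_equiv (Fintype.equivOfCardEq hcard)).mp h) k k
  rw [mul_apply, one_apply_eq] at h'
  simp only [mul_diagonal, conjTranspose_apply, ← mul_assoc, RCLike.star_def, RCLike.conj_mul,
    hU, RCLike.ofReal_one, one_pow, one_mul, Finset.sum_const, Finset.card_univ, nsmul_eq_mul] at h'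
  exact h'

end Matrix

section L2

open BoundedContinuousFunction

noncomputable def expBCF {n : ℕ} (t : Fin n → ℝ) : (Fin n → ℝ) →ᵇ ℂ :=
  .ofNormedAddCommGroup (fun x => expChar x t) (continuous_expChar_apply t) 1
    fun x => (norm_expChar x t).le

theorem inner_toLp_expBCF {n : ℕ} (μ : Measure (Fin n → ℝ)) [IsFiniteMeasure μ]
    (s t : Fin n → ℝ) :
    inner ℂ (toLp 2 μ ℂ (expBCF s)) (toLp 2 μ ℂ (expBCF t)) = muHat μ (t - s) := by
  rw [inner_toLp, muHat_eq_integral]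
  congr 1 with x
  simp [expBCF, conj_expChar, sub_eq_add_neg, AddChar.map_add_eq_mul]

namespace IsSpectrum

variable {n : ℕ} {μ : Measure (Fin n → ℝ)} {L : Finset (Fin n → ℝ)}

theorem sum_norm_sq_eq_one (h : IsSpectrum μ L) (t : Fin n → ℝ) :
    ∑ l ∈ L, ‖muHat μ (t - l)‖ ^ 2 = 1 := by
  have := h t
  rw [Finset.tsum_subtype' L fun l => (‖muHat μ (t - l)‖₊ : ℝ≥0∞) ^ 2] at this
  norm_cast at this
  simpa using congrArg NNReal.toReal this

variable [IsProbabilityMeasure μ]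

theorem muHat_sub_eq_zero (h : IsSpectrum μ L) {l l' : Fin n → ℝ} (hl : l ∈ L) (hl' : l' ∈ L)
    (hne : l ≠ l') : muHat μ (l - l') = 0 := by
  have hsum := h.sum_norm_sq_eq_one l
  rw [← Finset.add_sum_erase L _ hl, sub_self, muHat_zero, norm_one, one_pow,
    add_eq_left, Finset.sum_eq_zero_iff_of_nonneg fun _ _ => by positivity] at hsum
  simpa using hsum l' (Finset.mem_erase.mpr ⟨hne.symm, hl'⟩)

theorem orthonormal (h : IsSpectrum μ L) :
    Orthonormal ℂ fun l : L => toLp 2 μ ℂ (expBCF (l : Fin n → ℝ)) := by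
  classical
  rw [orthonormal_iff_ite]
  rintro ⟨l, hl⟩ ⟨l', hl'⟩
  rw [inner_toLp_expBCF]
  split_ifs with he
  · simp_all [muHat_zero]
  · exact h.muHat_sub_eq_zero hl' hl fun h => he (Subtype.ext h.symm)

theorem ae_expChar_eq_sum (h : IsSpectrum μ L) (t : Fin n → ℝ) :
    ∀ᵐ x ∂μ, expChar x t = ∑ l ∈ L, muHat μ (t - l) * expChar x l := by
  have hnorm : ‖toLp 2 μ ℂ (expBCF t)‖ ^ 2 = 1 := by
    rw [@norm_sq_eq_re_inner ℂ, inner_toLp_expBCF, sub_self, muHat_zero, RCLike.one_re]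
  have hexp := h.orthonormal.eq_sum_inner_smul_of_sum_norm_inner_sq_eq (s := .univ)
    (x := toLp 2 μ ℂ (expBCF t)) (by
      rw [hnorm, ← h.sum_norm_sq_eq_one t, ← Finset.sum_coe_sort L]
      simp only [inner_toLp_expBCF])
  simp only [inner_toLp_expBCF, ← map_smul, ← map_sum] at hexp
  have hsum := coeFn_toLp 2 μ ℂ (∑ l : L, muHat μ (t - l) • expBCF (l : Fin n → ℝ))
  rw [← hexp] at hsum
  filter_upwards [coeFn_toLp 2 μ ℂ (expBCF t), hsum] with x hx hsumx
  rw [hx] at hsumx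
  rw [← Finset.sum_coe_sort L]
  simpa [expBCF] using hsumx

end IsSpectrum

end L2

noncomputable def expMatrix {n : ℕ} (L A : Finset (Fin n → ℝ)) : Matrix L A ℂ :=
  .of fun l a => expChar (a : Fin n → ℝ) l

namespace IsSpectrum

variable {n : ℕ} {μ : Measure (Fin n → ℝ)} [IsProbabilityMeasure μ] {L : Finset (Fin n → ℝ)}

theorem ae_forall_expChar_eq_sum (h : IsSpectrum μ L) :
    ∀ᵐ x ∂μ, ∀ t, expChar x t = ∑ l ∈ L, muHat μ (t - l) * expChar x l := by
  obtain ⟨D, hDc, hDd⟩ := TopologicalSpace.exists_countable_dense (Fin n → ℝ)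
  filter_upwards [(ae_ball_iff hDc).mpr fun t _ => h.ae_expChar_eq_sum t] with x hx
  refine fun t => congrFun (Continuous.ext_on hDd (continuous_expChar x) ?_ hx) t
  exact continuous_finsetSum _ fun l _ =>
    ((continuous_muHat μ).comp (continuous_sub_right _)).mul continuous_const

theorem exists_finset_ae_mem (h : IsSpectrum μ L) :
    ∃ A : Finset (Fin n → ℝ), A.card ≤ L.card ∧ ∀ᵐ x ∂μ, x ∈ A := by
  classical
  set S := {x | ∀ t, expChar x t = ∑ l ∈ L, muHat μ (t - l) * expChar x l}
  obtain ⟨hS, hSL⟩ := finite_and_ncard_le_of_expChar_mem_span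
    (L.image fun l t => muHat μ (t - l)) (S := S) fun x hx => by
      have hx' : ⇑(expChar x) = ∑ l ∈ L, expChar x l • fun t => muHat μ (t - l) := by
        ext t; simp [hx t, mul_comm]
      rw [hx', Finset.coe_image]
      exact Submodule.sum_mem _ fun l hl =>
        Submodule.smul_mem _ _ (Submodule.subset_span (Set.mem_image_of_mem _ hl))
  refine ⟨hS.toFinset, ?_, h.ae_forall_expChar_eq_sum.mono fun x hx => hS.mem_toFinset.mpr hx⟩
  rw [← Set.ncard_eq_toFinset_card S hS]
  exact hSL.trans Finset.card_image_le

theorem expMatrix_mul_diagonal_mul_conjTranspose (h : IsSpectrum μ L)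
    {A : Finset (Fin n → ℝ)} (hμ : μ = ∑ a ∈ A, μ {a} • Measure.dirac a) :
    expMatrix L A * diagonal (fun a : A => ((μ {a.1}).toReal : ℂ)) * (expMatrix L A)ᴴ = 1 := by
  ext l l'
  have hmuHat := muHat_finset_sum_smul_dirac A (fun a => μ {a}) (fun a _ => measure_ne_top μ _)
    (l - l')
  rw [← hμ, ← Finset.sum_coe_sort A] at hmuHat
  rw [mul_apply]
  simp only [mul_diagonal, conjTranspose_apply, expMatrix, of_apply, RCLike.star_def,
    conj_expChar]
  rw [(hmuHat.trans (Finset.sum_congr rfl fun a _ => by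
    rw [sub_eq_add_neg, AddChar.map_add_eq_mul]; ring)).symm, one_apply]
  split_ifs with hll
  · rw [hll, sub_self, muHat_zero]
  · exact h.muHat_sub_eq_zero l.2 l'.2 (Subtype.coe_injective.ne hll)

end IsSpectrum

theorem stmt1 {n : ℕ} (μ : Measure (Fin n → ℝ)) [IsProbabilityMeasure μ]
    (Λ : Set (Fin n → ℝ)) (hΛ : IsSpectrum μ Λ) (hfin : Λ.Finite) :
    ∃ A : Finset (Fin n → ℝ), A.card = Λ.ncard ∧
      μ = (Λ.ncard : ℝ≥0∞)⁻¹ • ∑ a ∈ A, Measure.dirac a := by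
  obtain ⟨L, rfl⟩ := hfin.exists_finset_coe
  obtain ⟨A, hAL, hA⟩ := hΛ.exists_finset_ae_mem
  have hμ := Measure.ae_mem_finset_iff.mp hA
  have hgram := hΛ.expMatrix_mul_diagonal_mul_conjTranspose hμ
  have hcard : A.card = L.card :=
    hAL.antisymm (by simpa using Matrix.card_le_card_of_mul_eq_one hgram)
  have hweight := Matrix.card_mul_eq_one_of_mul_diagonal_mul_conjTranspose_eq_one
    (fun l a => norm_expChar _ _) hgram (by simp [hcard])
  refine ⟨A, by rw [hcard, Set.ncard_coe_finset], ?_⟩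
  rw [hμ, Set.ncard_coe_finset, Finset.smul_sum]
  refine Finset.sum_congr rfl fun a ha => ?_
  have hmass : μ {a} * L.card = 1 := by
    rw [← ENNReal.toReal_eq_one_iff, ENNReal.toReal_mul, ENNReal.toReal_natCast, mul_comm]
    simpa using congrArg Complex.re (hweight ⟨a, ha⟩)
  rw [ENNReal.eq_inv_of_mul_eq_one_left hmass]
end

section
/- Let μ be a Borel probability measure on ℝ^n and Λ ⊆ ℝ^n. The family E(Λ) = {e_λ : λ ∈ Λ} is orthonormal in L²(μ) if and only if the function h_Λ(t) = Σ_{λ∈Λ} |μ̂(t−λ)|² satisfies h_Λ(t) ≤ 1 for all t ∈ ℝ^n. -/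
open MeasureTheory Complex ENNReal

/-! The exponentials `e_t` are unit vectors of `L²(μ)` with `⟪e_λ, e_t⟫ = μ̂(t - λ)`, so
`h_Λ(t) = ∑_{λ ∈ Λ} |⟪e_λ, e_t⟫|²`. If `E(Λ)` is orthonormal, `h_Λ(t) ≤ ‖e_t‖² = 1` is Bessel's
inequality. Conversely, at `t = λ' ∈ Λ` the diagonal term `|⟪e_λ', e_λ'⟫|² = 1` already exhausts
the bound `h_Λ(λ') ≤ 1`, so every other term `|μ̂(λ' - λ)|²` vanishes. -/

open scoped InnerProductSpace

section Bessel

variable {𝕜 E ι : Type*} [RCLike 𝕜] [NormedAddCommGroup E] [InnerProductSpace 𝕜 E] {v : ι → E}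

theorem Orthonormal.tsum_enorm_inner_sq_le (hv : Orthonormal 𝕜 v) (x : E) :
    ∑' i, ‖⟪v i, x⟫_𝕜‖ₑ ^ 2 ≤ ‖x‖ₑ ^ 2 := by
  simp only [← ofReal_norm, ← ENNReal.ofReal_pow (norm_nonneg _)]
  rw [← ENNReal.ofReal_tsum_of_nonneg (fun _ ↦ by positivity) (hv.inner_products_summable x)]
  exact ENNReal.ofReal_le_ofReal (hv.tsum_inner_products_le x)

theorem orthonormal_of_tsum_enorm_inner_sq_le_one (hv : ∀ i, ‖v i‖ = 1)
    (h : ∀ j, ∑' i, ‖⟪v i, v j⟫_𝕜‖ₑ ^ 2 ≤ 1) : Orthonormal 𝕜 v := by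
  classical
  refine ⟨hv, fun i j hij ↦ ?_⟩
  have hdiag : ‖⟪v j, v j⟫_𝕜‖ₑ ^ 2 = 1 := by
    rw [inner_self_eq_norm_sq_to_K, hv j]; simp
  have hpair : ‖⟪v i, v j⟫_𝕜‖ₑ ^ 2 + 1 ≤ 0 + 1 := by
    calc ‖⟪v i, v j⟫_𝕜‖ₑ ^ 2 + 1 = ∑ k ∈ {i, j}, ‖⟪v k, v j⟫_𝕜‖ₑ ^ 2 := by
          rw [Finset.sum_pair hij, hdiag]
      _ ≤ ∑' k, ‖⟪v k, v j⟫_𝕜‖ₑ ^ 2 := ENNReal.sum_le_tsum _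
      _ ≤ 0 + 1 := by rw [zero_add]; exact h j
  simpa using ENNReal.le_of_add_le_add_right ENNReal.one_ne_top hpair

end Bessel

open scoped ComplexConjugate

section FourierExp

variable {n : ℕ}

noncomputable def fourierExp (t x : Fin n → ℝ) : ℂ :=
  Complex.exp (2 * (Real.pi : ℂ) * Complex.I * ((∑ i, t i * x i : ℝ) : ℂ))

theorem muHat_eq_integral_fourierExp (μ : Measure (Fin n → ℝ)) (t : Fin n → ℝ) :
    muHat μ t = ∫ x, fourierExp t x ∂μ := rfl

theorem norm_fourierExp (t x : Fin n → ℝ) : ‖fourierExp t x‖ = 1 := by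
  rw [fourierExp, Complex.norm_exp]
  simp [mul_comm, mul_assoc]

theorem continuous_fourierExp (t : Fin n → ℝ) : Continuous (fourierExp t) := by
  unfold fourierExp; fun_prop

theorem conj_fourierExp_mul_fourierExp (l t x : Fin n → ℝ) :
    conj (fourierExp l x) * fourierExp t x = fourierExp (t - l) x := by
  simp only [fourierExp, ← Complex.exp_conj, ← Complex.exp_add, map_mul, Complex.conj_I,
    Complex.conj_ofReal, map_ofNat, Pi.sub_apply]
  push_cast [sub_mul, Finset.sum_sub_distrib]
  ring_nf

theorem memLp_fourierExp (μ : Measure (Fin n → ℝ)) [IsFiniteMeasure μ] (p : ℝ≥0∞)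
    (t : Fin n → ℝ) : MemLp (fourierExp t) p μ :=
  .of_bound (continuous_fourierExp t).aestronglyMeasurable 1
    (.of_forall fun x ↦ (norm_fourierExp t x).le)

variable (μ : Measure (Fin n → ℝ))

noncomputable def fourierExpLp [IsFiniteMeasure μ] (t : Fin n → ℝ) : Lp ℂ 2 μ :=
  (memLp_fourierExp μ 2 t).toLp _

theorem inner_fourierExpLp [IsFiniteMeasure μ] (l t : Fin n → ℝ) :
    ⟪fourierExpLp μ l, fourierExpLp μ t⟫_ℂ = muHat μ (t - l) := by
  rw [L2.inner_def, muHat_eq_integral_fourierExp]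
  refine integral_congr_ae ?_
  filter_upwards [(memLp_fourierExp μ 2 l).coeFn_toLp, (memLp_fourierExp μ 2 t).coeFn_toLp]
    with x hl ht
  rw [fourierExpLp, fourierExpLp, hl, ht, RCLike.inner_apply, mul_comm,
    conj_fourierExp_mul_fourierExp]

variable [IsProbabilityMeasure μ]

theorem muHat_zero_s2 : muHat μ 0 = 1 := by
  simp [muHat]

theorem norm_fourierExpLp (t : Fin n → ℝ) : ‖fourierExpLp μ t‖ = 1 := by
  have h : ‖fourierExpLp μ t‖ ^ 2 = 1 := by
    rw [← inner_self_eq_norm_sq (𝕜 := ℂ), inner_fourierExpLp, sub_self, muHat_zero_s2, RCLike.one_re]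
  exact (pow_eq_one_iff_of_nonneg (norm_nonneg _) two_ne_zero).1 h

theorem orthonormal_fourierExpLp_iff (Λ : Set (Fin n → ℝ)) :
    Orthonormal ℂ (fun l : Λ ↦ fourierExpLp μ l) ↔
      ∀ l ∈ Λ, ∀ l' ∈ Λ, l ≠ l' → muHat μ (l - l') = 0 := by
  refine ⟨fun h l hl l' hl' hne ↦ ?_, fun h ↦ ⟨fun l ↦ norm_fourierExpLp μ l, fun {l' l} hne ↦ ?_⟩⟩
  · rw [← inner_fourierExpLp]
    exact h.2 (i := ⟨l', hl'⟩) (j := ⟨l, hl⟩) fun heq ↦ hne (congrArg Subtype.val heq).symm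
  · simp only [inner_fourierExpLp]
    exact h l l.2 l' l'.2 fun heq ↦ hne (Subtype.ext heq.symm)

end FourierExp

theorem stmt2 {n : ℕ} (μ : Measure (Fin n → ℝ)) [IsProbabilityMeasure μ]
    (Λ : Set (Fin n → ℝ)) :
    (∀ l ∈ Λ, ∀ l' ∈ Λ, l ≠ l' → muHat μ (l - l') = 0) ↔
      (∀ t : Fin n → ℝ,
        ∑' l : Λ, ((‖muHat μ (t - (l : Fin n → ℝ))‖₊ : ℝ≥0∞) ^ 2) ≤ 1) := by
  rw [← orthonormal_fourierExpLp_iff]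
  simp only [← enorm_eq_nnnorm, ← inner_fourierExpLp]
  refine ⟨fun h t ↦ ?_, fun h ↦ ?_⟩
  · simpa [← ofReal_norm, norm_fourierExpLp] using h.tsum_enorm_inner_sq_le (fourierExpLp μ t)
  · exact orthonormal_of_tsum_enorm_inner_sq_le_one (fun l ↦ norm_fourierExpLp μ l) fun l ↦ h l
end

section
/- Let A be a finite subset of ℝ^n. If A is a spectral set with spectrum Λ (so #Λ = #A = N), then the function c(t) = (1/N) Σ_{λ∈Λ} e^{2πi λ·t} satisfies: (1) c(a'−a) = δ_{a,a'} for a, a' ∈ A; (2) c(−t) = conj(c(t)) for all t; (3) c(u₁−u₂) = Σ_{a∈A} c(u₁+a)·conj(c(u₂+a)) for all u₁, u₂ ∈ ℝ^n. -/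
/-!
Spectrality says that the character matrix `F = (e(a ⬝ λ))_{a ∈ A, λ ∈ Λ}` satisfies
`F F* = N • 1`. As `F` is square, also `F* F = N • 1`, i.e. `∑_{a ∈ A} e((λ - μ) ⬝ a) = N δ_{λμ}`:
the roles of `A` and `Λ` can be exchanged. Properties (1) and (2) of `c` are immediate. For (3),
expanding `c(u₁ + a) conj c(u₂ + a)` and summing over `a` gives
`N⁻² ∑_{λ, μ ∈ Λ} e(λ ⬝ u₁ - μ ⬝ u₂) ∑_{a ∈ A} e((λ - μ) ⬝ a)`, and the dual orthogonality
collapses the double sum to its diagonal `N⁻¹ ∑_λ e(λ ⬝ (u₁ - u₂)) = c(u₁ - u₂)`.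
-/

open Real FourierTransform Matrix Finset ComplexConjugate

lemma cexp_two_pi_I_mul_eq_fourierChar (x : ℝ) : Complex.exp (2 * π * Complex.I * x) = 𝐞 x := by
  rw [fourierChar_apply]
  push_cast
  ring_nf

lemma fourierChar_mul_conj_fourierChar (x y : ℝ) : (𝐞 x : ℂ) * conj (𝐞 y : ℂ) = 𝐞 (x - y) := by
  rw [← Circle.coe_inv_eq_conj, ← Circle.coe_mul, ← AddChar.map_neg_eq_inv,
    ← AddChar.map_add_eq_mul, sub_eq_add_neg]

theorem Matrix.mul_eq_smul_one_comm_of_equiv {m k K : Type*} [Fintype m] [Fintype k]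
    [DecidableEq m] [DecidableEq k] [Field K] (e : m ≃ k) {M : Matrix m k K} {B : Matrix k m K}
    {r : K} (hr : r ≠ 0) : M * B = r • 1 ↔ B * M = r • 1 := by
  rw [← inv_smul_eq_iff₀ hr, ← inv_smul_eq_iff₀ hr, ← Matrix.mul_smul, ← Matrix.smul_mul]
  exact mul_eq_one_comm_of_equiv e

variable {ι : Type*} [Fintype ι]

def IsSpectralPair (A Λ : Finset (ι → ℝ)) : Prop :=
  #Λ = #A ∧ ∀ a ∈ A, ∀ a' ∈ A,
    ∑ l ∈ Λ, (𝐞 ((a - a') ⬝ᵥ l) : ℂ) = if a = a' then (#A : ℂ) else 0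

noncomputable def fourierMatrix (A Λ : Finset (ι → ℝ)) : Matrix A Λ ℂ :=
  of fun a l => 𝐞 ((a : ι → ℝ) ⬝ᵥ l)

lemma fourierMatrix_transpose (A Λ : Finset (ι → ℝ)) :
    (fourierMatrix A Λ)ᵀ = fourierMatrix Λ A := by
  ext l a
  simp [fourierMatrix, dotProduct_comm]

lemma fourierMatrix_mul_conjTranspose_apply (A Λ : Finset (ι → ℝ)) (a a' : A) :
    (fourierMatrix A Λ * (fourierMatrix A Λ)ᴴ) a a' =
      ∑ l ∈ Λ, (𝐞 ((a - a' : ι → ℝ) ⬝ᵥ l) : ℂ) := by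
  simp only [mul_apply, conjTranspose_apply, fourierMatrix, of_apply, RCLike.star_def,
    fourierChar_mul_conj_fourierChar, sub_dotProduct]
  exact sum_coe_sort Λ fun l => (𝐞 ((a : ι → ℝ) ⬝ᵥ l - (a' : ι → ℝ) ⬝ᵥ l) : ℂ)

lemma isSpectralPair_iff {A Λ : Finset (ι → ℝ)} :
    IsSpectralPair A Λ ↔
      #Λ = #A ∧ fourierMatrix A Λ * (fourierMatrix A Λ)ᴴ = (#A : ℂ) • 1 := by
  refine and_congr_right fun _ => ⟨fun h => ?_, fun h a ha a' ha' => ?_⟩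
  · ext a a'
    rw [fourierMatrix_mul_conjTranspose_apply, h a a.2 a' a'.2]
    simp only [Matrix.smul_apply, one_apply, Subtype.ext_iff]
    split_ifs <;> simp
  · have := congr_fun₂ h ⟨a, ha⟩ ⟨a', ha'⟩
    rw [fourierMatrix_mul_conjTranspose_apply] at this
    simpa only [Matrix.smul_apply, one_apply, Subtype.mk.injEq, smul_eq_mul, mul_ite, mul_one,
      mul_zero] using this

theorem IsSpectralPair.symm {A Λ : Finset (ι → ℝ)} (h : IsSpectralPair A Λ) :
    IsSpectralPair Λ A := by
  obtain ⟨hcard, hF⟩ := isSpectralPair_iff.mp h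
  rcases eq_or_ne #A 0 with hA | hA
  · simp_all [IsSpectralPair]
  have e : A ≃ Λ := Fintype.equivOfCardEq (by simp [hcard])
  have hF' := (mul_eq_smul_one_comm_of_equiv e (Nat.cast_ne_zero.mpr hA)).mp hF
  refine isSpectralPair_iff.mpr ⟨hcard.symm, ?_⟩
  rw [← fourierMatrix_transpose, conjTranspose_transpose_eq_transpose_conjTranspose,
    ← transpose_mul, hF', transpose_smul, transpose_one, hcard]

noncomputable def spectralKernel (Λ : Finset (ι → ℝ)) (t : ι → ℝ) : ℂ :=
  (#Λ : ℂ)⁻¹ * ∑ l ∈ Λ, (𝐞 (l ⬝ᵥ t) : ℂ)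

theorem IsSpectralPair.spectralKernel_sub {A Λ : Finset (ι → ℝ)} (h : IsSpectralPair A Λ)
    {a a' : ι → ℝ} (ha : a ∈ A) (ha' : a' ∈ A) :
    spectralKernel Λ (a' - a) = if a = a' then 1 else 0 := by
  simp_rw [spectralKernel, dotProduct_comm _ (a' - a), h.2 a' ha' a ha, h.1, eq_comm (a := a')]
  split_ifs
  · exact inv_mul_cancel₀ (Nat.cast_ne_zero.mpr (card_ne_zero_of_mem ha))
  · exact mul_zero _

theorem spectralKernel_neg (Λ : Finset (ι → ℝ)) (t : ι → ℝ) :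
    spectralKernel Λ (-t) = conj (spectralKernel Λ t) := by
  simp only [spectralKernel, dotProduct_neg, map_mul, map_inv₀, map_natCast, map_sum,
    Circle.starRingEnd_addChar]

theorem IsSpectralPair.spectralKernel_sub_eq_sum {A Λ : Finset (ι → ℝ)} (h : IsSpectralPair Λ A)
    (u₁ u₂ : ι → ℝ) :
    spectralKernel Λ (u₁ - u₂) =
      ∑ a ∈ A, spectralKernel Λ (u₁ + a) * conj (spectralKernel Λ (u₂ + a)) := by
  have hsplit (a l m : ι → ℝ) : (𝐞 (l ⬝ᵥ (u₁ + a)) : ℂ) * conj (𝐞 (m ⬝ᵥ (u₂ + a)) : ℂ) =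
      𝐞 (l ⬝ᵥ u₁ - m ⬝ᵥ u₂) * 𝐞 ((l - m) ⬝ᵥ a) := by
    rw [fourierChar_mul_conj_fourierChar, ← Circle.coe_mul, ← AddChar.map_add_eq_mul]
    simp only [dotProduct_add, sub_dotProduct]
    ring_nf
  have hdiagonal : ∀ l ∈ Λ,
      ∑ m ∈ Λ, (𝐞 (l ⬝ᵥ u₁ - m ⬝ᵥ u₂) : ℂ) * ∑ a ∈ A, (𝐞 ((l - m) ⬝ᵥ a) : ℂ) =
        #Λ * 𝐞 (l ⬝ᵥ (u₁ - u₂)) := by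
    intro l hl
    rw [sum_congr rfl fun m hm => by rw [h.2 l hl m hm], sum_eq_single_of_mem l hl]
    · simp [dotProduct_sub, mul_comm]
    · intro m _ hml
      simp [Ne.symm hml]
  calc spectralKernel Λ (u₁ - u₂)
      = (#Λ : ℂ)⁻¹ * (#Λ : ℂ)⁻¹ * ∑ l ∈ Λ, #Λ * (𝐞 (l ⬝ᵥ (u₁ - u₂)) : ℂ) := by
        rw [spectralKernel, ← mul_sum, ← mul_assoc]
        congr 1
        grind
    _ = (#Λ : ℂ)⁻¹ * (#Λ : ℂ)⁻¹ * ∑ l ∈ Λ, ∑ m ∈ Λ,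
          (𝐞 (l ⬝ᵥ u₁ - m ⬝ᵥ u₂) : ℂ) * ∑ a ∈ A, (𝐞 ((l - m) ⬝ᵥ a) : ℂ) := by
        rw [sum_congr rfl hdiagonal]
    _ = (#Λ : ℂ)⁻¹ * (#Λ : ℂ)⁻¹ * ∑ a ∈ A,
          (∑ l ∈ Λ, (𝐞 (l ⬝ᵥ (u₁ + a)) : ℂ)) * conj (∑ m ∈ Λ, (𝐞 (m ⬝ᵥ (u₂ + a)) : ℂ)) := by
        congr 1
        simp_rw [map_sum, sum_mul_sum, hsplit, mul_sum]
        exact (sum_congr rfl fun l _ => sum_comm).trans sum_comm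
    _ = _ := by
        rw [mul_sum]
        refine sum_congr rfl fun a _ => ?_
        rw [spectralKernel, spectralKernel, map_mul, map_inv₀, map_natCast]
        ring

theorem stmt6_general {n N : ℕ} (A Λ : Finset (Fin n → ℝ))
    (hAcard : A.card = N) (hΛcard : Λ.card = N)
    (hspec : ∀ a ∈ A, ∀ a' ∈ A,
      ∑ l ∈ Λ, Complex.exp (2 * (Real.pi : ℂ) * Complex.I *
        ((∑ i, (a i - a' i) * l i : ℝ) : ℂ)) = if a = a' then (N : ℂ) else 0)
    (c : (Fin n → ℝ) → ℂ)
    (hc : ∀ t, c t = (N : ℂ)⁻¹ * ∑ l ∈ Λ, Complex.exp (2 * (Real.pi : ℂ) * Complex.I *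
      ((∑ i, l i * t i : ℝ) : ℂ))) :
    (∀ a ∈ A, ∀ a' ∈ A, c (a' - a) = if a = a' then 1 else 0) ∧
    (∀ t : Fin n → ℝ, c (-t) = starRingEnd ℂ (c t)) ∧
    (∀ u₁ u₂ : Fin n → ℝ, c (u₁ - u₂) = ∑ a ∈ A, c (u₁ + a) * starRingEnd ℂ (c (u₂ + a))) := by
  have hpair : IsSpectralPair A Λ := by
    refine ⟨hΛcard.trans hAcard.symm, fun a ha a' ha' => ?_⟩
    simp only [← cexp_two_pi_I_mul_eq_fourierChar, hAcard]
    exact hspec a ha a' ha'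
  obtain rfl : c = spectralKernel Λ := funext fun t => by
    simp only [hc, spectralKernel, hΛcard, ← cexp_two_pi_I_mul_eq_fourierChar]
    rfl
  exact ⟨fun a ha a' ha' => hpair.spectralKernel_sub ha ha', spectralKernel_neg Λ,
    hpair.symm.spectralKernel_sub_eq_sum⟩

theorem stmt6 {n N : ℕ} (A Λ : Finset (Fin n → ℝ)) (hN : 0 < N)
    (hAcard : A.card = N) (hΛcard : Λ.card = N)
    (hspec : ∀ a ∈ A, ∀ a' ∈ A,
      ∑ l ∈ Λ, Complex.exp (2 * (Real.pi : ℂ) * Complex.I *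
        ((∑ i, (a i - a' i) * l i : ℝ) : ℂ)) = if a = a' then (N : ℂ) else 0)
    (c : (Fin n → ℝ) → ℂ)
    (hc : ∀ t, c t = (N : ℂ)⁻¹ * ∑ l ∈ Λ, Complex.exp (2 * (Real.pi : ℂ) * Complex.I *
      ((∑ i, l i * t i : ℝ) : ℂ))) :
    (∀ a ∈ A, ∀ a' ∈ A, c (a' - a) = if a = a' then 1 else 0) ∧
    (∀ t : Fin n → ℝ, c (-t) = starRingEnd ℂ (c t)) ∧
    (∀ u₁ u₂ : Fin n → ℝ, c (u₁ - u₂) = ∑ a ∈ A, c (u₁ + a) * starRingEnd ℂ (c (u₂ + a))) :=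
  stmt6_general A Λ hAcard hΛcard hspec c hc
end

section
/- Let A ⊆ ℝ^n be finite of cardinality N, and suppose there exists a continuous function c : ℝ^n → ℂ with c(a'−a) = δ_{a,a'} for a,a' ∈ A, c(−t) = conj(c(t)), and c(u₁−u₂) = Σ_{a∈A} c(u₁+a)·conj(c(u₂+a)) for all u₁,u₂ ∈ ℝ^n. Then the matrices U(t) defined by U(t)_{a,a'} = c(t + a' − a) form a group of unitary N×N matrices: U(t₁)U(t₂) = U(t₁+t₂), U(0) = I, and U(−t) = U(t)*. -/
open Matrix

section TranslationMatrix

variable {G R : Type*} [AddCommGroup G] [Semiring R]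

def translationMatrix (c : G → R) (A : Finset G) (t : G) : Matrix A A R :=
  fun a a' => c (t + a' - a)

variable {c : G → R} {A : Finset G}

theorem translationMatrix_zero [DecidableEq G]
    (hδ : ∀ a ∈ A, ∀ a' ∈ A, c (a' - a) = if a = a' then 1 else 0) :
    translationMatrix c A 0 = 1 := by
  ext a a'
  simp only [translationMatrix, zero_add, hδ a a.2 a' a'.2, Matrix.one_apply, Subtype.ext_iff]

variable [StarRing R]

theorem translationMatrix_mul
    (hconj : ∀ t, c (-t) = star (c t))
    (hker : ∀ u₁ u₂, c (u₁ - u₂) = ∑ a ∈ A, c (u₁ + a) * star (c (u₂ + a)))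
    (t₁ t₂ : G) :
    translationMatrix c A t₁ * translationMatrix c A t₂ = translationMatrix c A (t₁ + t₂) := by
  ext a a'
  -- the entry at `(a, a')` is `hker` at `u₁ = t₁ - a`, `u₂ = -t₂ - a'`
  have hterm : ∀ b : A, translationMatrix c A t₁ a b * translationMatrix c A t₂ b a' =
      c ((t₁ - a) + b) * star (c ((-t₂ - a') + b)) := fun b => by
    rw [← hconj]
    simp only [translationMatrix]
    congr 2 <;> abel
  calc ∑ b, translationMatrix c A t₁ a b * translationMatrix c A t₂ b a'
      = ∑ b ∈ A, c ((t₁ - a) + b) * star (c ((-t₂ - a') + b)) := by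
        simp only [hterm]
        exact Finset.sum_coe_sort A fun b => c ((t₁ - a) + b) * star (c ((-t₂ - a') + b))
    _ = c ((t₁ - a) - (-t₂ - a')) := (hker _ _).symm
    _ = translationMatrix c A (t₁ + t₂) a a' := by
        simp only [translationMatrix]
        congr 1; abel

theorem translationMatrix_neg (hconj : ∀ t, c (-t) = star (c t)) (t : G) :
    translationMatrix c A (-t) = (translationMatrix c A t)ᴴ := by
  ext a a'
  simp only [translationMatrix, conjTranspose_apply, ← hconj]
  congr 1; abel

theorem translationMatrix_mul_conjTranspose_self [DecidableEq G]
    (hδ : ∀ a ∈ A, ∀ a' ∈ A, c (a' - a) = if a = a' then 1 else 0)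
    (hconj : ∀ t, c (-t) = star (c t))
    (hker : ∀ u₁ u₂, c (u₁ - u₂) = ∑ a ∈ A, c (u₁ + a) * star (c (u₂ + a))) (t : G) :
    translationMatrix c A t * (translationMatrix c A t)ᴴ = 1 := by
  rw [← translationMatrix_neg hconj, translationMatrix_mul hconj hker, add_neg_cancel,
    translationMatrix_zero hδ]

end TranslationMatrix

theorem stmt7_general {n : ℕ} (A : Finset (Fin n → ℝ))
    (c : (Fin n → ℝ) → ℂ)
    (hδ : ∀ a ∈ A, ∀ a' ∈ A, c (a' - a) = if a = a' then 1 else 0)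
    (hconj : ∀ t : Fin n → ℝ, c (-t) = starRingEnd ℂ (c t))
    (hker : ∀ u₁ u₂ : Fin n → ℝ,
      c (u₁ - u₂) = ∑ a ∈ A, c (u₁ + a) * starRingEnd ℂ (c (u₂ + a)))
    (U : (Fin n → ℝ) → Matrix ↥A ↥A ℂ)
    (hU : ∀ t (a a' : ↥A), U t a a' = c (t + (a' : Fin n → ℝ) - (a : Fin n → ℝ))) :
    (∀ t₁ t₂ : Fin n → ℝ, U t₁ * U t₂ = U (t₁ + t₂)) ∧
    (U 0 = 1) ∧
    (∀ t : Fin n → ℝ, U (-t) = (U t)ᴴ) ∧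
    (∀ t : Fin n → ℝ, U t * (U t)ᴴ = 1) := by
  obtain rfl : U = translationMatrix c A := funext fun t => Matrix.ext (hU t)
  exact ⟨translationMatrix_mul hconj hker, translationMatrix_zero hδ,
    translationMatrix_neg hconj, translationMatrix_mul_conjTranspose_self hδ hconj hker⟩

theorem stmt7 {n : ℕ} (A : Finset (Fin n → ℝ))
    (c : (Fin n → ℝ) → ℂ) (hcont : Continuous c)
    (hδ : ∀ a ∈ A, ∀ a' ∈ A, c (a' - a) = if a = a' then 1 else 0)
    (hconj : ∀ t : Fin n → ℝ, c (-t) = starRingEnd ℂ (c t))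
    (hker : ∀ u₁ u₂ : Fin n → ℝ,
      c (u₁ - u₂) = ∑ a ∈ A, c (u₁ + a) * starRingEnd ℂ (c (u₂ + a)))
    (U : (Fin n → ℝ) → Matrix ↥A ↥A ℂ)
    (hU : ∀ t (a a' : ↥A), U t a a' = c (t + (a' : Fin n → ℝ) - (a : Fin n → ℝ))) :
    (∀ t₁ t₂ : Fin n → ℝ, U t₁ * U t₂ = U (t₁ + t₂)) ∧
    (U 0 = 1) ∧
    (∀ t : Fin n → ℝ, U (-t) = (U t)ᴴ) ∧
    (∀ t : Fin n → ℝ, U t * (U t)ᴴ = 1) :=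
  stmt7_general A c hδ hconj hker U hU
end

section
/- Let μ be a probability measure on ℝ^n with compact support X, having the local translation property that μ(A) = μ(A + γ) whenever A and A + γ are both Borel subsets of X. Let Γ be a countable subgroup of ℝ^n. Then there exists a Borel measure μ̃ on ℝ^n such that (i) μ̃(A) = μ̃(A + γ) for all Borel A ⊆ X + Γ and γ ∈ Γ, and (ii) the restriction of μ̃ to X equals μ. -/
/-!
Enumerate `Γ = {γ₀, γ₁, …}` and cut `X + Γ` into the disjoint Borel pieces
`Pₖ = (X + γₖ) \ ⋃_{j<k} (X + γⱼ)`. On `Pₖ` let `μ̃` be the translate of `μ` by `γₖ`. Since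
`Pₖ - γₖ ⊆ X`, the local translation property shows that whenever `C ⊆ X + Γ` and `C - δ ⊆ X`,
every piece `C ∩ Pₖ` is charged the same mass by `μ̃` as `(C ∩ Pₖ) - δ` by `μ`, so
`μ̃ C = μ (C - δ)`. Translation invariance of `μ̃` on `X + Γ` follows piece by piece, and `δ = 0`
gives `μ̃ = μ` on `X`.
-/

open MeasureTheory Pointwise Set Function

section

variable {V : Type*} [AddCommGroup V]

def translatePieces (X : Set V) (γ : ℕ → V) : ℕ → Set V :=
  disjointed fun k => (· + γ k) '' X

theorem preimage_inter_translatePieces_subset {X : Set V} {γ : ℕ → V} (S : Set V) (k : ℕ) :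
    (· + γ k) ⁻¹' (S ∩ translatePieces X γ k) ⊆ X := by
  intro x hx
  obtain ⟨y, hy, hyx⟩ := disjointed_subset _ k hx.2
  rwa [← add_right_cancel hyx]

variable [MeasurableSpace V]

def LocallyTranslationInvariantOn (μ : Measure V) (X : Set V) : Prop :=
  ∀ (A : Set V) (γ : V), MeasurableSet A → A ⊆ X → (· + γ) '' A ⊆ X → μ ((· + γ) '' A) = μ A

noncomputable def translateExtension (μ : Measure V) (X : Set V) (γ : ℕ → V) : Measure V :=
  Measure.sum fun k => (μ.map (· + γ k)).restrict (translatePieces X γ k)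

variable [MeasurableAdd V] {μ : Measure V} {X : Set V} {γ : ℕ → V}

theorem LocallyTranslationInvariantOn.measure_preimage_add_eq
    (hμ : LocallyTranslationInvariantOn μ X) {A : Set V} (hA : MeasurableSet A)
    {a b : V} (ha : (· + a) ⁻¹' A ⊆ X) (hb : (· + b) ⁻¹' A ⊆ X) :
    μ ((· + a) ⁻¹' A) = μ ((· + b) ⁻¹' A) := by
  have himage : (· + (a - b)) '' ((· + a) ⁻¹' A) = (· + b) ⁻¹' A := by
    ext x
    simp [image_add_right, add_assoc]
  rw [← himage]
  exact (hμ _ _ (hA.preimage (measurable_add_const a)) ha (himage ▸ hb)).symm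

theorem measurableSet_translatePieces (hX : MeasurableSet X) (k : ℕ) :
    MeasurableSet (translatePieces X γ k) :=
  MeasurableSet.disjointed (fun _ => by
    rw [image_add_right]
    exact hX.preimage (measurable_add_const _)) k

theorem measure_preimage_eq_tsum_translatePieces (ν : Measure V)
    (hX : MeasurableSet X) {C : Set V} (hC : MeasurableSet C)
    (hCU : C ⊆ ⋃ k, (· + γ k) '' X) {f : V → V} (hf : Measurable f) :
    ν (f ⁻¹' C) = ∑' k, ν (f ⁻¹' (C ∩ translatePieces X γ k)) := by
  have hdisj : Pairwise (Disjoint on fun k => f ⁻¹' (C ∩ translatePieces X γ k)) :=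
    fun _ _ hij =>
      ((disjoint_disjointed _ hij).mono inter_subset_right inter_subset_right).preimage f
  rw [← measure_iUnion hdisj fun k => (hC.inter (measurableSet_translatePieces hX k)).preimage hf,
    ← preimage_iUnion, ← inter_iUnion, translatePieces, iUnion_disjointed,
    inter_eq_self_of_subset_left hCU]

theorem translateExtension_apply (hX : MeasurableSet X) {C : Set V} (hC : MeasurableSet C) :
    translateExtension μ X γ C = ∑' k, μ ((· + γ k) ⁻¹' (C ∩ translatePieces X γ k)) := by
  rw [translateExtension, Measure.sum_apply _ hC]
  refine tsum_congr fun k => ?_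
  rw [Measure.restrict_apply hC, Measure.map_apply (measurable_add_const _)
    (hC.inter (measurableSet_translatePieces hX k))]

theorem translateExtension_apply_eq_of_preimage_subset (hμ : LocallyTranslationInvariantOn μ X)
    (hX : MeasurableSet X) {C : Set V} (hC : MeasurableSet C)
    (hCU : C ⊆ ⋃ k, (· + γ k) '' X) {δ : V} (hδ : (· + δ) ⁻¹' C ⊆ X) :
    translateExtension μ X γ C = μ ((· + δ) ⁻¹' C) := by
  rw [translateExtension_apply hX hC,
    measure_preimage_eq_tsum_translatePieces μ hX hC hCU (measurable_add_const δ)]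
  exact tsum_congr fun k =>
    hμ.measure_preimage_add_eq (hC.inter (measurableSet_translatePieces hX k))
      (preimage_inter_translatePieces_subset C k) ((preimage_mono inter_subset_left).trans hδ)

theorem translateExtension_preimage_add (hμ : LocallyTranslationInvariantOn μ X)
    (hX : MeasurableSet X) {A : Set V} (hA : MeasurableSet A)
    (hAU : A ⊆ ⋃ k, (· + γ k) '' X) {h : V} (hhU : (· + h) ⁻¹' A ⊆ ⋃ k, (· + γ k) '' X) :
    translateExtension μ X γ ((· + h) ⁻¹' A) = translateExtension μ X γ A := by
  have hsplit := measure_preimage_eq_tsum_translatePieces (translateExtension μ X γ) hX hA hAU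
    measurable_id
  simp only [preimage_id] at hsplit
  rw [measure_preimage_eq_tsum_translatePieces _ hX hA hAU (measurable_add_const h), hsplit]
  -- both pieces have mass `μ ((A ∩ Pₖ) - γₖ)`
  refine tsum_congr fun k => ?_
  have hpiece := hA.inter (measurableSet_translatePieces (γ := γ) hX k)
  have hshift : (· + (γ k - h)) ⁻¹' ((· + h) ⁻¹' (A ∩ translatePieces X γ k)) =
      (· + γ k) ⁻¹' (A ∩ translatePieces X γ k) := by
    simp only [preimage_preimage, add_assoc, sub_add_cancel]
  have hpull := preimage_inter_translatePieces_subset (γ := γ) (X := X) A k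
  rw [translateExtension_apply_eq_of_preimage_subset hμ hX
      (hpiece.preimage (measurable_add_const h))
      ((preimage_mono inter_subset_left).trans hhU) (hshift ▸ hpull),
    translateExtension_apply_eq_of_preimage_subset hμ hX hpiece
      (inter_subset_left.trans hAU) hpull, hshift]

theorem translateExtension_restrict (hμ : LocallyTranslationInvariantOn μ X)
    (hX : MeasurableSet X) (h0 : 0 ∈ range γ) :
    (translateExtension μ X γ).restrict X = μ.restrict X := by
  obtain ⟨k₀, hk₀⟩ := h0
  have hXU : X ⊆ ⋃ k, (· + γ k) '' X :=
    fun x hx => mem_iUnion.2 ⟨k₀, x, hx, by simp [hk₀]⟩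
  ext s hs
  rw [Measure.restrict_apply hs, Measure.restrict_apply hs]
  simpa using translateExtension_apply_eq_of_preimage_subset hμ hX (hs.inter hX)
    (inter_subset_right.trans hXU) (δ := 0) (by simp)

end

theorem stmt9 {n : ℕ} (μ : Measure (Fin n → ℝ)) [IsProbabilityMeasure μ]
    (X : Set (Fin n → ℝ)) (hX : IsCompact X) (hXfull : μ X = 1)
    (hloc : ∀ (A : Set (Fin n → ℝ)) (γ : Fin n → ℝ), MeasurableSet A →
      A ⊆ X → (fun x => x + γ) '' A ⊆ X → μ ((fun x => x + γ) '' A) = μ A)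
    (Γ : AddSubgroup (Fin n → ℝ)) (hΓ : (Γ : Set (Fin n → ℝ)).Countable) :
    ∃ μt : Measure (Fin n → ℝ),
      (∀ (A : Set (Fin n → ℝ)), MeasurableSet A → A ⊆ X + (Γ : Set (Fin n → ℝ)) →
        ∀ γ ∈ Γ, μt ((fun x => x + γ) '' A) = μt A) ∧
      μt.restrict X = μ := by
  obtain ⟨γ, hγ⟩ := hΓ.exists_eq_range ⟨0, Γ.zero_mem⟩
  have hXm : MeasurableSet X := hX.isClosed.measurableSet
  have hU : ⋃ k, (· + γ k) '' X = X + (Γ : Set (Fin n → ℝ)) := by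
    rw [hγ, ← iUnion_add_right_image, biUnion_range]
  refine ⟨translateExtension μ X γ, fun A hA hAΓ g hg => ?_, ?_⟩
  · have hshiftΓ : (· + -g) ⁻¹' A ⊆ X + (Γ : Set (Fin n → ℝ)) := by
      intro x hx
      obtain ⟨y, hy, c, hc, hyc⟩ := hAΓ hx
      refine ⟨y, hy, c + g, Γ.add_mem hc hg, ?_⟩
      simp only at hyc ⊢
      rw [← add_assoc, hyc, neg_add_cancel_right]
    rw [image_add_right]
    exact translateExtension_preimage_add hloc hXm hA (hU ▸ hAΓ) (hU ▸ hshiftΓ)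
  · rw [translateExtension_restrict hloc hXm (hγ ▸ Γ.zero_mem)]
    exact Measure.restrict_eq_self_of_ae_mem
      (mem_ae_iff.2 ((prob_compl_eq_zero_iff hXm).2 hXfull))
end

section
/- Let μ = μ_B be the self-similar measure with equal weights of the affine IFS τ_b(x) = R^{-1}(x+b), b ∈ B, N = #B, S = Rᵗ. Suppose μ has a spectrum Λ which decomposes as a disjoint union Λ = ⋃_{i=1}^p (a_i + SΛ_i) with each Λ_i ⊆ Per(δ̂_B) (the period group of δ̂_B) and each Λ_i itself a spectrum for μ. Then p = N and {S^{-1}a_1, …, S^{-1}a_p} is a spectrum for the counting measure δ_B = (1/N)Σ_{b∈B} δ_b, i.e., Σ_{i=1}^p |δ̂_B(t − S^{-1}a_i)|² = 1 for all t. -/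
open MeasureTheory Complex ENNReal

/-- `δ̂_B(x) = (1/N) ∑_{b∈B} e^{2πi b·x}`. -/
noncomputable def deltaHat {n : ℕ} (B : Finset (Fin n → ℝ)) (x : Fin n → ℝ) : ℂ :=
  (B.card : ℂ)⁻¹ * ∑ b ∈ B, Complex.exp (2 * (Real.pi : ℂ) * Complex.I *
    ((∑ i, b i * x i : ℝ) : ℂ))

/-! The refinement equation `μ̂(x) = δ̂_B(S⁻¹x) μ̂(S⁻¹x)` and the periodicity of `δ̂_B` along
`Λᵢ` split the spectral identity of `Λ` at the point `S t` along the decomposition into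
`∑ᵢ |δ̂_B(t - S⁻¹aᵢ)|² · ∑_{λ ∈ Λᵢ} |μ̂(t - S⁻¹aᵢ - λ)|² = 1`, and the inner sums are `1` because
each `Λᵢ` is a spectrum. Expanding `|δ̂_B|²` then writes the constant `N²` as a trigonometric
polynomial in `t` whose constant coefficient, coming from the diagonal `b = b'`, is `N p`; linear
independence of the characters `t ↦ e^{2πi v·t}` forces `p = N`. -/

open Matrix

section Characters

variable {n : ℕ}

noncomputable def expDot (v u : Fin n → ℝ) : ℂ :=
  Complex.exp (2 * (Real.pi : ℂ) * Complex.I * ((v ⬝ᵥ u : ℝ) : ℂ))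

theorem expDot_add_right (v u w : Fin n → ℝ) : expDot v (u + w) = expDot v u * expDot v w := by
  rw [expDot, expDot, expDot, ← Complex.exp_add, dotProduct_add]
  push_cast; ring_nf

theorem expDot_add_left (v w u : Fin n → ℝ) : expDot (v + w) u = expDot v u * expDot w u := by
  rw [expDot, expDot, expDot, ← Complex.exp_add, add_dotProduct]
  push_cast; ring_nf

theorem expDot_comm (v u : Fin n → ℝ) : expDot v u = expDot u v := by
  rw [expDot, expDot, dotProduct_comm]

@[simp]
theorem expDot_zero_left (u : Fin n → ℝ) : expDot 0 u = 1 := by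
  simp [expDot]

theorem norm_expDot (v u : Fin n → ℝ) : ‖expDot v u‖ = 1 := by
  rw [expDot, show 2 * (Real.pi : ℂ) * Complex.I * ((v ⬝ᵥ u : ℝ) : ℂ)
      = ((2 * Real.pi * (v ⬝ᵥ u) : ℝ) : ℂ) * Complex.I by push_cast; ring,
    Complex.norm_exp_ofReal_mul_I]

theorem conj_expDot (v u : Fin n → ℝ) : starRingEnd ℂ (expDot v u) = expDot (-v) u := by
  rw [expDot, expDot, ← Complex.exp_conj, neg_dotProduct]
  simp only [map_mul, Complex.conj_I, Complex.conj_ofReal, map_ofNat]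
  push_cast; ring_nf

theorem continuous_expDot (v : Fin n → ℝ) : Continuous (expDot v) := by
  unfold expDot
  fun_prop

theorem integrable_expDot (v : Fin n → ℝ) (ν : Measure (Fin n → ℝ)) [IsFiniteMeasure ν] :
    Integrable (expDot v) ν :=
  .of_bound (continuous_expDot v).aestronglyMeasurable 1
    (.of_forall fun u => (norm_expDot v u).le)

theorem expDot_injective : Function.Injective (expDot : (Fin n → ℝ) → (Fin n → ℝ) → ℂ) := by
  intro v w h
  by_contra hne
  obtain ⟨j, hj⟩ : ∃ j, (v - w) j ≠ 0 := Function.ne_iff.mp (sub_ne_zero.mpr hne)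
  set u : Fin n → ℝ := Pi.single j (2 * (v - w) j)⁻¹
  have hdot : (v - w) ⬝ᵥ u = 2⁻¹ := by
    rw [dotProduct_single, mul_inv, mul_left_comm, mul_inv_cancel₀ hj, mul_one]
  have hminus : expDot (v - w) u = -1 := by
    rw [expDot, hdot, ← Complex.exp_pi_mul_I]
    push_cast; ring_nf
  have hone : expDot (v - w) u = 1 := by
    have := expDot_add_left (v - w) w u
    rw [sub_add_cancel, congrFun h u] at this
    exact (mul_eq_right₀ (Complex.exp_ne_zero _)).mp this.symm
  norm_num [hone] at hminus

theorem linearIndependent_expDot :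
    LinearIndependent ℂ (expDot : (Fin n → ℝ) → (Fin n → ℝ) → ℂ) :=
  let χ : (Fin n → ℝ) → Multiplicative (Fin n → ℝ) →* ℂ := fun v =>
    { toFun := fun u => expDot v u.toAdd
      map_one' := by simp [expDot]
      map_mul' := fun u w => expDot_add_right v u.toAdd w.toAdd }
  (linearIndependent_monoidHom (Multiplicative (Fin n → ℝ)) ℂ).comp χ
    fun _ _ h => expDot_injective (DFunLike.coe_fn_eq.mpr h)

theorem sum_filter_eq_of_forall_sum_mul_expDot_eq {ι : Type*} (s : Finset ι)
    (g : ι → Fin n → ℝ) (α : ι → ℂ) (C : ℂ) (h : ∀ u, ∑ q ∈ s, α q * expDot (g q) u = C) :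
    ∑ q ∈ s with g q = 0, α q = C := by
  classical
  set V := insert 0 (s.image g)
  set γ : (Fin n → ℝ) → ℂ := fun v => (∑ q ∈ s with g q = v, α q) - if v = 0 then C else 0
  have h0V : (0 : Fin n → ℝ) ∈ V := Finset.mem_insert_self _ _
  have hγ : ∑ v ∈ V, γ v • expDot v = 0 := by
    funext u
    have hfib : ∑ v ∈ V, (∑ q ∈ s with g q = v, α q) * expDot v u = C := by
      simp_rw [Finset.sum_mul]
      rw [← h u, ← Finset.sum_fiberwise_of_maps_to (t := V) (g := g)
        (fun q hq => Finset.mem_insert_of_mem (Finset.mem_image_of_mem g hq))]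
      refine Finset.sum_congr rfl fun v _ => Finset.sum_congr rfl fun q hq => ?_
      rw [(Finset.mem_filter.mp hq).2]
    simp only [Finset.sum_apply, Pi.smul_apply, smul_eq_mul, Pi.zero_apply, γ, sub_mul,
      Finset.sum_sub_distrib, hfib, ite_mul, zero_mul, Finset.sum_ite_eq', if_pos h0V,
      expDot_zero_left, mul_one, sub_self]
  have := linearIndependent_iff'.mp linearIndependent_expDot V γ hγ 0 h0V
  simpa [γ, sub_eq_zero] using this

end Characters

section DeltaHat
variable {n : ℕ}

theorem deltaHat_eq_sum_expDot (B : Finset (Fin n → ℝ)) (x : Fin n → ℝ) :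
    deltaHat B x = (B.card : ℂ)⁻¹ * ∑ b ∈ B, expDot b x := rfl

theorem card_sq_mul_sq_norm_deltaHat {B : Finset (Fin n → ℝ)} (hB : B.Nonempty)
    (x : Fin n → ℝ) :
    (B.card : ℂ) ^ 2 * ((‖deltaHat B x‖ ^ 2 : ℝ) : ℂ) = ∑ b ∈ B, ∑ b' ∈ B, expDot (b - b') x := by
  have hN : (B.card : ℂ) ≠ 0 := Nat.cast_ne_zero.mpr hB.card_pos.ne'
  rw [Complex.ofReal_pow, ← Complex.mul_conj', deltaHat_eq_sum_expDot, map_mul, map_inv₀,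
    map_natCast, map_sum, mul_mul_mul_comm, Finset.sum_mul_sum]
  simp_rw [conj_expDot, ← expDot_add_left, ← sub_eq_add_neg]
  field_simp

theorem card_eq_of_forall_sum_sq_norm_deltaHat_eq_one {ι : Type*} [Fintype ι]
    {B : Finset (Fin n → ℝ)} (hB : B.Nonempty) (c : ι → Fin n → ℝ)
    (h : ∀ t, ∑ i, ‖deltaHat B (t - c i)‖ ^ 2 = 1) : Fintype.card ι = B.card := by
  have hN : (B.card : ℂ) ≠ 0 := Nat.cast_ne_zero.mpr hB.card_pos.ne'
  have hpoly : ∀ t, ∑ q ∈ B ×ˢ B, (∑ i, expDot (q.1 - q.2) (-c i)) * expDot (q.1 - q.2) t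
      = (B.card : ℂ) ^ 2 := by
    intro t
    calc _ = ∑ i, ∑ b ∈ B, ∑ b' ∈ B, expDot (b - b') (t - c i) := by
          simp_rw [Finset.sum_product, Finset.sum_mul, sub_eq_add_neg t, expDot_add_right,
            mul_comm (expDot _ t)]
          rw [Finset.sum_comm (s := Finset.univ)]
          exact Finset.sum_congr rfl fun _ _ => by rw [Finset.sum_comm (s := Finset.univ)]
      _ = ∑ i, (B.card : ℂ) ^ 2 * ((‖deltaHat B (t - c i)‖ ^ 2 : ℝ) : ℂ) := by
          simp_rw [card_sq_mul_sq_norm_deltaHat hB]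
      _ = (B.card : ℂ) ^ 2 := by
          rw [← Finset.mul_sum, ← Complex.ofReal_sum, h t, Complex.ofReal_one, mul_one]
  have hdiag := sum_filter_eq_of_forall_sum_mul_expDot_eq (B ×ˢ B)
    (fun q : (Fin n → ℝ) × (Fin n → ℝ) => q.1 - q.2) _ _ hpoly
  have hfilter : {q ∈ B ×ˢ B | q.1 - q.2 = 0} = B.diag := by
    ext q
    simp only [Finset.mem_filter, Finset.mem_product, Finset.mem_diag, sub_eq_zero]
    grind
  rw [Finset.sum_congr hfilter fun q hq => by rw [(Finset.mem_diag.mp hq).2, sub_self]] at hdiag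
  simp only [expDot_zero_left, Finset.sum_const, Finset.card_univ, nsmul_eq_mul, mul_one,
    Finset.diag_card] at hdiag
  exact_mod_cast mul_left_cancel₀ hN (hdiag.trans (sq _))

end DeltaHat

theorem Matrix.isUnit_det_of_zero_notMem_spectrum {m : Type*} [Fintype m] [DecidableEq m]
    (R : Matrix m m ℝ) (h : (0 : ℂ) ∉ spectrum ℂ (R.map Complex.ofReal)) : IsUnit R.det := by
  have hunit : IsUnit (R.map Complex.ofReal).det := by
    rw [← Matrix.isUnit_iff_isUnit_det]
    exact not_not.mp (mt (spectrum.zero_mem_iff ℂ).mpr h)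
  change IsUnit (Complex.ofRealHom.mapMatrix R).det at hunit
  rw [← RingHom.map_det, isUnit_iff_ne_zero] at hunit
  exact isUnit_iff_ne_zero.mpr (Complex.ofReal_ne_zero.mp hunit)

section MuHat
variable {n : ℕ}

theorem muHat_eq_integral_expDot (μ : Measure (Fin n → ℝ)) (t : Fin n → ℝ) :
    muHat μ t = ∫ x, expDot t x ∂μ := rfl

theorem expDot_mulVec (A : Matrix (Fin n) (Fin n) ℝ) (v u : Fin n → ℝ) :
    expDot v (A *ᵥ u) = expDot (Aᵀ *ᵥ v) u := by
  rw [expDot, expDot, dotProduct_mulVec, mulVec_transpose]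

theorem muHat_map_mulVec_add (μ : Measure (Fin n → ℝ)) [IsFiniteMeasure μ]
    (A : Matrix (Fin n) (Fin n) ℝ) (b x : Fin n → ℝ) :
    muHat (μ.map fun y => A *ᵥ (y + b)) x = expDot b (Aᵀ *ᵥ x) * muHat μ (Aᵀ *ᵥ x) := by
  have hmeas : Measurable fun y : Fin n → ℝ => A *ᵥ (y + b) :=
    ((Matrix.mulVecLin A).continuous_of_finiteDimensional.comp
      (continuous_id.add continuous_const)).measurable
  rw [muHat_eq_integral_expDot, integral_map hmeas.aemeasurable
    (continuous_expDot x).aestronglyMeasurable, muHat_eq_integral_expDot, ← integral_const_mul]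
  congr 1 with y
  rw [expDot_mulVec, expDot_add_right, expDot_comm _ b, mul_comm]

theorem muHat_eq_deltaHat_mul_muHat (R : Matrix (Fin n) (Fin n) ℝ) (B : Finset (Fin n → ℝ))
    (μ : Measure (Fin n → ℝ)) [IsFiniteMeasure μ]
    (hself : μ = (B.card : ℝ≥0∞)⁻¹ • ∑ b ∈ B, μ.map (fun x => R⁻¹ *ᵥ (x + b)))
    (x : Fin n → ℝ) :
    muHat μ x = deltaHat B ((Rᵀ)⁻¹ *ᵥ x) * muHat μ ((Rᵀ)⁻¹ *ᵥ x) := by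
  have hint : ∀ b ∈ B, Integrable (expDot x) (μ.map fun y => R⁻¹ *ᵥ (y + b)) :=
    fun b _ => integrable_expDot x _
  conv_lhs => rw [muHat_eq_integral_expDot, hself]
  rw [integral_smul_measure, integral_finsetSum_measure hint]
  simp_rw [← muHat_eq_integral_expDot, muHat_map_mulVec_add, ← transpose_nonsing_inv]
  rw [deltaHat_eq_sum_expDot, ← Finset.sum_mul, ENNReal.toReal_inv, ENNReal.toReal_natCast,
    Complex.real_smul, mul_assoc]
  push_cast
  ring

end MuHat

section Spectrum
variable {n : ℕ} {μ : Measure (Fin n → ℝ)} {B : Finset (Fin n → ℝ)}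
  {S : Matrix (Fin n) (Fin n) ℝ}

theorem tsum_sq_nnnorm_muHat_sub_image_eq (hS : IsUnit S.det)
    (hμ : ∀ x, muHat μ x = deltaHat B (S⁻¹ *ᵥ x) * muHat μ (S⁻¹ *ᵥ x))
    {Γ : Set (Fin n → ℝ)} (hΓ : IsSpectrum μ Γ)
    (hper : ∀ l ∈ Γ, ∀ x, deltaHat B (x + l) = deltaHat B x) (a u : Fin n → ℝ) :
    ∑' x : (fun l => a + S *ᵥ l) '' Γ, (‖muHat μ (S *ᵥ u - x)‖₊ : ℝ≥0∞) ^ 2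
      = (‖deltaHat B (u - S⁻¹ *ᵥ a)‖₊ : ℝ≥0∞) ^ 2 := by
  have hinj : Function.Injective fun l => a + S *ᵥ l :=
    fun l l' h => mulVec_injective_of_det_ne_zero hS.ne_zero (add_left_cancel h)
  have hterm : ∀ l ∈ Γ, muHat μ (S *ᵥ u - (a + S *ᵥ l))
      = deltaHat B (u - S⁻¹ *ᵥ a) * muHat μ (u - S⁻¹ *ᵥ a - l) := by
    intro l hl
    have harg : S⁻¹ *ᵥ (S *ᵥ u - (a + S *ᵥ l)) = u - S⁻¹ *ᵥ a - l := by
      rw [mulVec_sub, mulVec_add, mulVec_mulVec, mulVec_mulVec, nonsing_inv_mul _ hS,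
        one_mulVec, one_mulVec]
      abel
    rw [hμ, harg, ← hper l hl, sub_add_cancel]
  rw [tsum_image (fun x => (‖muHat μ (S *ᵥ u - x)‖₊ : ℝ≥0∞) ^ 2) hinj.injOn]
  calc _ = ∑' l : Γ, (‖deltaHat B (u - S⁻¹ *ᵥ a)‖₊ : ℝ≥0∞) ^ 2
        * (‖muHat μ (u - S⁻¹ *ᵥ a - l)‖₊ : ℝ≥0∞) ^ 2 :=
        tsum_congr fun l => by rw [hterm l l.2, nnnorm_mul, ENNReal.coe_mul, mul_pow]
    _ = _ := by rw [ENNReal.tsum_mul_left, hΓ, mul_one]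

theorem sum_sq_norm_deltaHat_eq_one_of_isSpectrum_iUnion {ι : Type*} [Fintype ι]
    (hS : IsUnit S.det) (hμ : ∀ x, muHat μ x = deltaHat B (S⁻¹ *ᵥ x) * muHat μ (S⁻¹ *ᵥ x))
    {Λ : Set (Fin n → ℝ)} (hΛ : IsSpectrum μ Λ) (a : ι → Fin n → ℝ)
    (Λi : ι → Set (Fin n → ℝ)) (hper : ∀ i, ∀ l ∈ Λi i, ∀ x, deltaHat B (x + l) = deltaHat B x)
    (hdecomp : Λ = ⋃ i, (fun l => a i + S *ᵥ l) '' Λi i)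
    (hdisj : Pairwise (Function.onFun Disjoint (fun i => (fun l => a i + S *ᵥ l) '' Λi i)))
    (hspec : ∀ i, IsSpectrum μ (Λi i)) (t : Fin n → ℝ) :
    ∑ i, ‖deltaHat B (t - S⁻¹ *ᵥ a i)‖ ^ 2 = 1 := by
  have h := hΛ (S *ᵥ t)
  rw [hdecomp, ENNReal.tsum_biUnion (f := fun x => (‖muHat μ (S *ᵥ t - x)‖₊ : ℝ≥0∞) ^ 2)
    (hdisj.pairwiseDisjoint _), tsum_fintype] at h
  simp_rw [tsum_sq_nnnorm_muHat_sub_image_eq hS hμ (hspec _) (hper _)] at h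
  have := congrArg ENNReal.toReal h
  rw [ENNReal.toReal_sum fun _ _ => by finiteness] at this
  simpa using this

end Spectrum

theorem stmt19 {n : ℕ} (R : Matrix (Fin n) (Fin n) ℝ)
    (hR : ∀ z ∈ spectrum ℂ (R.map (Complex.ofReal)), 1 < ‖z‖)
    (B : Finset (Fin n → ℝ)) (h0B : (0 : Fin n → ℝ) ∈ B)
    (τ : (Fin n → ℝ) → (Fin n → ℝ) → (Fin n → ℝ))
    (hτ : ∀ b x, τ b x = R⁻¹.mulVec (x + b))
    (μ : Measure (Fin n → ℝ)) [IsProbabilityMeasure μ]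
    (hself : μ = (B.card : ℝ≥0∞)⁻¹ • ∑ b ∈ B, μ.map (τ b))
    (Λ : Set (Fin n → ℝ)) (hΛ : IsSpectrum μ Λ)
    (p : ℕ) (a : Fin p → (Fin n → ℝ)) (Λi : Fin p → Set (Fin n → ℝ))
    (hper : ∀ i, ∀ l ∈ Λi i, ∀ x, deltaHat B (x + l) = deltaHat B x)
    (hdecomp : Λ = ⋃ i, (fun l => a i + R.transpose.mulVec l) '' Λi i)
    (hdisj : Pairwise (Function.onFun Disjoint
      (fun i => (fun l => a i + R.transpose.mulVec l) '' Λi i)))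
    (hspec : ∀ i, IsSpectrum μ (Λi i)) :
    p = B.card ∧
      ∀ t : Fin n → ℝ, ∑ i, ‖deltaHat B (t - (R.transpose)⁻¹.mulVec (a i))‖ ^ 2 = 1 := by
  obtain rfl : τ = fun b x => R⁻¹ *ᵥ (x + b) := funext₂ hτ
  have hS : IsUnit Rᵀ.det := by
    rw [det_transpose]
    exact R.isUnit_det_of_zero_notMem_spectrum fun h0 => (hR 0 h0).not_ge (by simp)
  have hsum := sum_sq_norm_deltaHat_eq_one_of_isSpectrum_iUnion hS
    (muHat_eq_deltaHat_mul_muHat R B μ hself) hΛ a Λi hper hdecomp hdisj hspec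
  refine ⟨?_, hsum⟩
  simpa using card_eq_of_forall_sum_sq_norm_deltaHat_eq_one ⟨0, h0B⟩ _ hsum
end
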